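/- The sequence of truncated cube-root nested radicals C m 1 converges to 2 as m → ∞; that is, ∛(4 + 1²∛(10 + 3²∛(16 + 5²∛(22 + ...)))) = 2. -/
import Mathlib

noncomputable def C : ℕ → ℝ → ℝ
  | 0, _ => 0
  | m + 1, y => (1 + 3 * y + y ^ 2 * C m (y + 2)) ^ (1 / 3 : ℝ)

lemma C_nonneg : ∀ m : ℕ, ∀ y : ℝ, 0 ≤ y → 0 ≤ C m y := by
  intro m
  induction m with
  | zero => intro y hy; simp [C]
  | succ n ih =>
    intro y hy
    simp only [C]
    apply Real.rpow_nonneg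
    have := ih (y + 2) (by linarith)
    nlinarith

lemma C_base_nonneg (m : ℕ) (y : ℝ) (hy : 0 ≤ y) :
    0 ≤ 1 + 3 * y + y ^ 2 * C m (y + 2) := by
  have := C_nonneg m (y + 2) (by linarith)
  nlinarith

lemma C_cube (m : ℕ) (y : ℝ) (hy : 0 ≤ y) :
    (C (m + 1) y) ^ 3 = 1 + 3 * y + y ^ 2 * C m (y + 2) := by
  simp only [C]
  rw [← Real.rpow_natCast (_ ^ (1/3 : ℝ)) 3, ← Real.rpow_mul (C_base_nonneg m y hy)]
  norm_num

lemma C_le : ∀ m : ℕ, ∀ y : ℝ, 0 ≤ y → C m y ≤ y + 1 := by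
  intro m
  induction m with
  | zero => intro y hy; simp [C]; linarith
  | succ n ih =>
    intro y hy
    have h1 := C_cube n y hy
    have h2 := ih (y + 2) (by linarith)
    have h3 := C_nonneg (n + 1) y hy
    nlinarith [sq_nonneg (C (n+1) y), sq_nonneg (C (n+1) y - (y+1)), sq_nonneg (C (n+1) y + (y+1))]


lemma C_ge_one (m : ℕ) (y : ℝ) (hy : 1 ≤ y) : 1 ≤ C (m + 1) y := by
  have h0 : (0:ℝ) ≤ y := by linarith
  have h1 := C_cube m y h0
  have h2 := C_nonneg (m + 1) y h0
  have h3 := C_nonneg m (y + 2) (by linarith)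
  nlinarith [sq_nonneg (C (m+1) y), sq_nonneg (C (m+1) y - 1), sq_nonneg (C (m+1) y + 1)]

lemma C_step (m : ℕ) (y : ℝ) (hy : 1 ≤ y) :
    ((y + 1) - C (m + 1) y) * ((y + 1) * (y + 2)) ≤ y ^ 2 * ((y + 3) - C m (y + 2)) := by
  have h0 : (0:ℝ) ≤ y := by linarith
  have h1 := C_cube m y h0
  have h2 := C_ge_one m y hy
  have h3 := C_le (m + 1) y h0
  -- (y+1)³ - c³ = y²((y+3) - C m (y+2)) ; factor
  set c := C (m + 1) y with hc
  have key : (y + 1) ^ 3 - c ^ 3 = y ^ 2 * ((y + 3) - C m (y + 2)) := by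
    rw [h1]; ring
  nlinarith [mul_nonneg (sub_nonneg.2 h3) (sub_nonneg.2 h2), sq_nonneg c,
    mul_nonneg (sub_nonneg.2 h3) (sq_nonneg c)]

set_option maxHeartbeats 800000 in
lemma C_inv : ∀ m j : ℕ,
    ((2 * (j:ℝ) + 2) - C m (2 * j + 1)) ^ 2 * (2 * j + 2 * m + 1)
      ≤ (2 * (j:ℝ) + 2) ^ 2 * (2 * j + 1) := by
  intro m
  induction m with
  | zero =>
    intro j
    simp only [C]
    push_cast
    ring_nf
    nlinarith [sq_nonneg ((j:ℝ))]
  | succ n ih =>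
    intro j
    have hJ : (0:ℝ) ≤ (j:ℝ) := Nat.cast_nonneg j
    have hM : (0:ℝ) ≤ (n:ℝ) := Nat.cast_nonneg n
    set J := (j:ℝ)
    have hy : (1:ℝ) ≤ 2 * J + 1 := by linarith
    have h0 : (0:ℝ) ≤ 2 * J + 1 := by linarith
    have hstep := C_step n (2 * J + 1) hy
    have ihj := ih (j + 1)
    have hcast : ((j:ℕ) + 1 : ℕ) = j + 1 := rfl
    have e1 : (2 * ((j:ℝ) + 1) + 1) = (2 * J + 1) + 2 := by push_cast; ring
    rw [show ((2:ℝ) * ((j+1:ℕ):ℝ) + 1) = (2 * J + 1) + 2 by push_cast; ring] at ihj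
    set D1 := (2 * J + 2) - C (n + 1) (2 * J + 1) with hD1
    set D2 := (2 * J + 4) - C n ((2 * J + 1) + 2) with hD2
    have hD1nn : 0 ≤ D1 := by
      have := C_le (n + 1) (2 * J + 1) h0
      simp [hD1]; linarith
    have hD2nn : 0 ≤ D2 := by
      have := C_le n ((2 * J + 1) + 2) (by linarith)
      simp [hD2]; linarith
    -- hstep : D1 * ((2J+2)*(2J+3)) ≤ (2J+1)^2 * D2
    have hstep' : D1 * ((2 * J + 2) * (2 * J + 3)) ≤ (2 * J + 1) ^ 2 * D2 := by
      have : ((2*J+1) + 1) = 2*J+2 := by ring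
      nlinarith [hstep]
    -- ihj : D2^2 * (2J + 2 + 2n + 1) ≤ (2J+4)^2 * (2J+3)
    have ihj' : D2 ^ 2 * (2 * J + 2 * n + 3) ≤ (2 * J + 4) ^ 2 * (2 * J + 3) := by
      rw [hD2]
      push_cast at ihj
      nlinarith [ihj]
    -- square hstep'
    have hsq : D1 ^ 2 * ((2 * J + 2) ^ 2 * (2 * J + 3) ^ 2) ≤ (2 * J + 1) ^ 4 * D2 ^ 2 := by
      nlinarith [mul_le_mul hstep' hstep' (by positivity) (by positivity), sq_nonneg D1, sq_nonneg D2]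
    have hpoly : (2 * J + 1) ^ 4 * ((2 * J + 4) ^ 2 * (2 * J + 3))
        ≤ ((2 * J + 2) ^ 2 * (2 * J + 1)) * ((2 * J + 2) ^ 2 * (2 * J + 3) ^ 2) := by
      nlinarith [sq_nonneg J, hJ, sq_nonneg (J*J), pow_nonneg hJ 3]
    have hpos : (0:ℝ) < (2 * J + 2) ^ 2 * (2 * J + 3) ^ 2 := by positivity
    have hK : (0:ℝ) ≤ 2 * J + 2 * n + 3 := by linarith
    -- chain
    have chain : D1 ^ 2 * (2 * J + 2 * n + 3) * ((2 * J + 2) ^ 2 * (2 * J + 3) ^ 2)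
        ≤ ((2 * J + 2) ^ 2 * (2 * J + 1)) * ((2 * J + 2) ^ 2 * (2 * J + 3) ^ 2) := by
      calc D1 ^ 2 * (2 * J + 2 * n + 3) * ((2 * J + 2) ^ 2 * (2 * J + 3) ^ 2)
          = (D1 ^ 2 * ((2 * J + 2) ^ 2 * (2 * J + 3) ^ 2)) * (2 * J + 2 * n + 3) := by ring
        _ ≤ ((2 * J + 1) ^ 4 * D2 ^ 2) * (2 * J + 2 * n + 3) := by
            apply mul_le_mul_of_nonneg_right hsq hK
        _ = (2 * J + 1) ^ 4 * (D2 ^ 2 * (2 * J + 2 * n + 3)) := by ring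
        _ ≤ (2 * J + 1) ^ 4 * ((2 * J + 4) ^ 2 * (2 * J + 3)) := by
            apply mul_le_mul_of_nonneg_left ihj' (by positivity)
        _ ≤ _ := hpoly
    have final : D1 ^ 2 * (2 * J + 2 * (n:ℝ) + 3) ≤ (2 * J + 2) ^ 2 * (2 * J + 1) :=
      le_of_mul_le_mul_right chain hpos
    push_cast
    nlinarith [final]

theorem nested_cbrt_special_case_two :
    Filter.Tendsto (fun m => C m 1) Filter.atTop (nhds 2) := by
  have hub : ∀ m : ℕ, C m 1 ≤ 2 := by
    intro m; have := C_le m 1 (by norm_num); linarith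
  have hlb : ∀ m : ℕ, 2 - Real.sqrt (4 / (2 * (m:ℝ) + 1)) ≤ C m 1 := by
    intro m
    have hinv := C_inv m 0
    simp only [Nat.cast_zero] at hinv
    norm_num at hinv
    -- hinv : (2 - C m 1)^2 * (2*m+1) ≤ 4
    have hpos : (0:ℝ) < 2 * (m:ℝ) + 1 := by positivity
    have hsq : (2 - C m 1) ^ 2 ≤ 4 / (2 * (m:ℝ) + 1) := by
      rw [le_div_iff₀ hpos]; nlinarith [hinv]
    have h0 : 0 ≤ 2 - C m 1 := by linarith [hub m]
    have := Real.sqrt_le_sqrt hsq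
    rw [Real.sqrt_sq h0] at this
    linarith
  have hden : Filter.Tendsto (fun m : ℕ => 2 * (m:ℝ) + 1) Filter.atTop Filter.atTop := by
    apply Filter.tendsto_atTop_add_const_right
    exact (tendsto_natCast_atTop_atTop (R := ℝ)).const_mul_atTop (by norm_num)
  have hfrac : Filter.Tendsto (fun m : ℕ => 4 / (2 * (m:ℝ) + 1)) Filter.atTop (nhds 0) :=
    Filter.Tendsto.div_atTop tendsto_const_nhds hden
  have hsqrt : Filter.Tendsto (fun m : ℕ => Real.sqrt (4 / (2 * (m:ℝ) + 1)))
      Filter.atTop (nhds 0) := by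
    have := (Real.continuous_sqrt.tendsto 0).comp hfrac
    simpa only [Function.comp_def, Real.sqrt_zero] using this
  have hlow : Filter.Tendsto (fun m : ℕ => 2 - Real.sqrt (4 / (2 * (m:ℝ) + 1)))
      Filter.atTop (nhds 2) := by
    have := (tendsto_const_nhds (x := (2:ℝ)) (f := Filter.atTop (α := ℕ))).sub hsqrt
    simpa using this
  exact tendsto_of_tendsto_of_tendsto_of_le_of_le hlow tendsto_const_nhds
    (fun m => hlb m) (fun m => hub m)
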